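/- arXiv:1612.04702 — 4 statements merged into one kernel-verified Lean document; each statement's English description precedes it below -/
import Mathlib

section
/- For every r ∈ ℕ, the sum-color cost of the star with r leaves satisfies s̊(K_{1,r}) = r + 1 + u_r. -/
variable {V : Type} [Fintype V] [DecidableEq V]

/-- The `k`-th triangular number `t_k = C(k+1,2)`. -/
def tri (k : ℕ) : ℕ := (k + 1).choose 2

/-- A natural number is triangular if it equals `t_k` for some `k`. -/
def IsTriangular (m : ℕ) : Prop := ∃ k, m = tri k

/-- `uval r = max {k : t_k ≤ r}`. -/
def uval (r : ℕ) : ℕ := Nat.findGreatest (fun k => tri k ≤ r) r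

open Classical in
/-- Sum-color cost (optimal total score of the slow-coloring game) of the subgraph
of `G` induced by `S`: it is `0` when there are no vertices, and otherwise the maximum
over nonempty marked sets `M ⊆ S` of `|M|` plus the minimum over nonempty independent
subsets `I ⊆ M` of the sum-color cost of the graph with `I` deleted. -/
noncomputable def scost (G : SimpleGraph V) (S : Finset V) : ℕ :=
  if S = ∅ then 0
  else
    (S.powerset.erase ∅).attach.sup fun M =>
      M.1.card +
      WithBot.unbotD 0
        ((((M.1.powerset.erase ∅).filter
              fun I => ∀ x ∈ I, ∀ y ∈ I, ¬ G.Adj x y).attach.image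
            fun I => scost G (S \ I.1)).min)
termination_by S.card
decreasing_by
  · have hI := I.2
    have hM := M.2
    simp only [Finset.mem_filter, Finset.mem_erase, Finset.mem_powerset] at hI hM
    have hsub : I.1 ⊆ S := hI.1.2.trans hM.2
    have hne : I.1.Nonempty := Finset.nonempty_iff_ne_empty.mpr hI.1.1
    exact Finset.card_lt_card (Finset.sdiff_ssubset hsub hne)

/-- The star `K_{1,r}` with one center (the vertex `0`) and `r` leaves. -/
def starGraph (r : ℕ) : SimpleGraph (Fin (r + 1)) :=
  SimpleGraph.fromRel (fun x _ => x = 0)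


/-!
Consider a star with center `c` and `k` leaves, and let `u = u_k`. Painter answers a marked set
consisting of the center and `m` leaves by coloring the center if `m ≤ u` and the marked leaves
otherwise; a marked set of leaves alone is colored entirely. Lister marks the center together with
`u` leaves. By induction on `k`, both strategies give exactly `k + 1 + u_k`; the arithmetic behind
this is `t_{i-1} + i = t_i` and `t_{u_k} ≤ k < t_{u_k + 1}`.
-/

theorem tri_succ (k : ℕ) : tri (k + 1) = tri k + (k + 1) := by
  simp only [tri, Nat.choose_succ_succ (k + 1) 1, Nat.choose_one_right]
  ring

theorem tri_mono : Monotone tri := fun _ _ h => Nat.choose_le_choose 2 (by omega)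

theorem self_le_tri (k : ℕ) : k ≤ tri k := by
  induction k with
  | zero => exact Nat.zero_le _
  | succ k ih => rw [tri_succ]; omega

theorem tri_uval_le (r : ℕ) : tri (uval r) ≤ r :=
  Nat.findGreatest_spec (P := fun k => tri k ≤ r) (m := 0) (Nat.zero_le r) (Nat.zero_le r)

theorem le_uval {k r : ℕ} (h : tri k ≤ r) : k ≤ uval r :=
  Nat.le_findGreatest ((self_le_tri k).trans h) h

theorem uval_mono : Monotone uval := fun _ _ h =>
  Nat.findGreatest_mono (fun _ hk => hk.trans h) h

theorem uval_lt_of_lt_tri {k r : ℕ} (h : r < tri k) : uval r < k := by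
  by_contra! hk
  exact (tri_mono hk).trans (tri_uval_le r) |>.not_gt h

theorem lt_tri_uval_succ (r : ℕ) : r < tri (uval r + 1) := by
  by_contra! h
  exact (le_uval h).not_gt (Nat.lt_succ_self _)

theorem uval_sub_lt_uval {k b : ℕ} (hb : uval k < b) (hbk : b ≤ k) : uval (k - b) < uval k := by
  apply uval_lt_of_lt_tri
  have := lt_tri_uval_succ k
  rw [tri_succ] at this
  omega

theorem pred_le_uval_sub {k i : ℕ} (hi : i ≤ uval k) : i - 1 ≤ uval (k - i) := by
  obtain _ | i := i
  · exact Nat.zero_le _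
  rw [Nat.add_sub_cancel]
  apply le_uval
  have := (tri_mono hi).trans (tri_uval_le k)
  rw [tri_succ] at this
  omega

-- `scost` applies `WithBot.unbotD` to the `WithTop`-valued `Finset.min`; both are `Option α`.
theorem Finset.unbotD_min_eq_min' {α : Type*} [LinearOrder α] (d : α) {s : Finset α}
    (hs : s.Nonempty) : WithBot.unbotD d s.min = s.min' hs := by
  rw [← Finset.coe_min' hs]
  rfl

section SlowColoring

variable (G : SimpleGraph V)

theorem scost_empty : scost G ∅ = 0 := by
  rw [scost, if_pos rfl]

theorem scost_le_of_forall {S : Finset V} {n : ℕ}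
    (h : ∀ M : Finset V, M ≠ ∅ → M ⊆ S →
      ∃ I : Finset V, I ≠ ∅ ∧ I ⊆ M ∧ (∀ x ∈ I, ∀ y ∈ I, ¬ G.Adj x y) ∧
        M.card + scost G (S \ I) ≤ n) :
    scost G S ≤ n := by
  classical
  rcases eq_or_ne S ∅ with rfl | hS
  · rw [scost_empty]
    exact Nat.zero_le n
  rw [scost, if_neg hS]
  refine Finset.sup_le fun ⟨M, hM⟩ _ => ?_
  rw [Finset.mem_erase, Finset.mem_powerset] at hM
  obtain ⟨I, hIne, hIM, hIindep, hle⟩ := h M hM.1 hM.2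
  have hImem : scost G (S \ I) ∈ (((M.powerset.erase ∅).filter
      fun I => ∀ x ∈ I, ∀ y ∈ I, ¬ G.Adj x y).attach.image fun I => scost G (S \ I.1)) :=
    Finset.mem_image.mpr
      ⟨⟨I, Finset.mem_filter.mpr ⟨by simp [hIne, hIM], hIindep⟩⟩, Finset.mem_attach _ _, rfl⟩
  rw [Finset.unbotD_min_eq_min' 0 ⟨_, hImem⟩]
  exact (Nat.add_le_add_left (Finset.min'_le _ _ hImem) _).trans hle

theorem le_scost_of_forall {S : Finset V} {n : ℕ} (M : Finset V) (hMne : M ≠ ∅) (hMS : M ⊆ S)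
    (h : ∀ I : Finset V, I ≠ ∅ → I ⊆ M → (∀ x ∈ I, ∀ y ∈ I, ¬ G.Adj x y) →
      n ≤ M.card + scost G (S \ I)) :
    n ≤ scost G S := by
  classical
  have hS : S ≠ ∅ := fun hS => hMne (Finset.subset_empty.mp (hS ▸ hMS))
  rw [scost, if_neg hS]
  refine le_trans ?_ (Finset.le_sup (b := ⟨M, by simp [hMne, hMS]⟩) (Finset.mem_attach _ _))
  obtain ⟨x, hx⟩ := Finset.nonempty_iff_ne_empty.mpr hMne
  have hResponses : (((M.powerset.erase ∅).filter
      fun I => ∀ x ∈ I, ∀ y ∈ I, ¬ G.Adj x y).attach.image fun I => scost G (S \ I.1)).Nonempty :=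
    ⟨_, Finset.mem_image.mpr ⟨⟨{x}, by simp [hx]⟩, Finset.mem_attach _ _, rfl⟩⟩
  rw [Finset.unbotD_min_eq_min' 0 hResponses]
  obtain ⟨⟨I, hI⟩, -, hIeq⟩ := Finset.mem_image.mp (Finset.min'_mem _ hResponses)
  rw [← hIeq]
  simp only [Finset.mem_filter, Finset.mem_erase, Finset.mem_powerset] at hI
  exact h I hI.1.1 hI.1.2 hI.2

theorem card_le_scost (S : Finset V) : S.card ≤ scost G S := by
  rcases eq_or_ne S ∅ with rfl | hS
  · exact Nat.zero_le _
  exact le_scost_of_forall G S hS subset_rfl fun _ _ _ _ => Nat.le_add_right _ _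

theorem scost_le_card_of_indep {S : Finset V} (hS : ∀ x ∈ S, ∀ y ∈ S, ¬ G.Adj x y) :
    scost G S ≤ S.card := by
  induction S using Finset.strongInduction with
  | H S ih =>
  refine scost_le_of_forall G fun M hMne hMS => ⟨M, hMne, subset_rfl,
    fun x hx y hy => hS x (hMS hx) y (hMS hy), ?_⟩
  have hsub : S \ M ⊂ S := Finset.sdiff_ssubset hMS (Finset.nonempty_iff_ne_empty.mpr hMne)
  have := ih _ hsub fun x hx y hy => hS x (hsub.1 hx) y (hsub.1 hy)
  rw [Finset.card_sdiff_of_subset hMS] at this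
  have := Finset.card_le_card hMS
  omega

variable {G} {c : V} {L : Finset V}

theorem scost_insert_le_of_indep (hc : c ∉ L) (hL : ∀ x ∈ L, ∀ y ∈ L, ¬ G.Adj x y)
    (ih : ∀ L' ⊂ L, scost G (insert c L') ≤ L'.card + 1 + uval L'.card) :
    scost G (insert c L) ≤ L.card + 1 + uval L.card := by
  refine scost_le_of_forall G fun M hMne hMS => ?_
  by_cases hcenter : c ∈ M ∧ M.card ≤ uval L.card + 1
  · refine ⟨{c}, Finset.singleton_ne_empty c, Finset.singleton_subset_iff.mpr hcenter.1,
      by simp, ?_⟩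
    rw [Finset.sdiff_singleton_eq_erase, Finset.erase_insert hc]
    have := scost_le_card_of_indep G hL
    omega
  · rw [not_and, not_le] at hcenter
    have hleaves : M.erase c ⊆ L := fun x hx =>
      (Finset.mem_insert.mp (hMS (Finset.mem_of_mem_erase hx))).resolve_left
        (Finset.ne_of_mem_erase hx)
    have hcardM : M.card - 1 ≤ (M.erase c).card := Finset.pred_card_le_card_erase
    have hbig : c ∈ M → uval L.card < (M.erase c).card := fun hcM => by
      have := hcenter hcM
      rw [Finset.card_erase_of_mem hcM]
      omega
    have hne : (M.erase c).Nonempty := by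
      by_cases hcM : c ∈ M
      · exact Finset.card_pos.mp (by have := hbig hcM; omega)
      · rwa [Finset.erase_eq_of_notMem hcM, Finset.nonempty_iff_ne_empty]
    refine ⟨M.erase c, hne.ne_empty, Finset.erase_subset c M,
      fun x hx y hy => hL x (hleaves hx) y (hleaves hy), ?_⟩
    have hb := Finset.card_le_card hleaves
    rw [Finset.insert_sdiff_of_notMem _ (Finset.notMem_erase c M)]
    have hrest := ih _ (Finset.sdiff_ssubset hleaves hne)
    rw [Finset.card_sdiff_of_subset hleaves] at hrest
    by_cases hcM : c ∈ M
    · have := uval_sub_lt_uval (hbig hcM) hb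
      omega
    · have := uval_mono (Nat.sub_le L.card (M.erase c).card)
      have : (M.erase c).card = M.card := by rw [Finset.erase_eq_of_notMem hcM]
      omega

theorem le_scost_insert_of_adj (hc : c ∉ L) (hcL : ∀ x ∈ L, G.Adj c x)
    (ih : ∀ L' ⊂ L, L'.card + 1 + uval L'.card ≤ scost G (insert c L')) :
    L.card + 1 + uval L.card ≤ scost G (insert c L) := by
  obtain ⟨T, hTL, hTcard⟩ := Finset.exists_subset_card_eq
    ((self_le_tri _).trans (tri_uval_le L.card))
  have hcT : c ∉ T := fun h => hc (hTL h)
  refine le_scost_of_forall G (insert c T) (Finset.insert_ne_empty c T)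
    (Finset.insert_subset_insert c hTL) fun I hIne hIM hIindep => ?_
  rw [Finset.card_insert_of_notMem hcT, hTcard]
  by_cases hcI : c ∈ I
  · have hIc : I = {c} := Finset.eq_singleton_iff_unique_mem.mpr ⟨hcI, fun x hx => by
      by_contra hxc
      have hxT := (Finset.mem_insert.mp (hIM hx)).resolve_left hxc
      exact hIindep c hcI x hx (hcL x (hTL hxT))⟩
    rw [hIc, Finset.sdiff_singleton_eq_erase, Finset.erase_insert hc]
    have := card_le_scost G L
    omega
  · have hIT : I ⊆ T := fun x hx =>
      (Finset.mem_insert.mp (hIM hx)).resolve_left fun hxc => hcI (hxc ▸ hx)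
    have hIL := hIT.trans hTL
    have hIne' := Finset.nonempty_iff_ne_empty.mpr hIne
    rw [Finset.insert_sdiff_of_notMem _ hcI]
    have hrest := ih _ (Finset.sdiff_ssubset hIL hIne')
    rw [Finset.card_sdiff_of_subset hIL] at hrest
    have hiu : I.card ≤ uval L.card := hTcard ▸ Finset.card_le_card hIT
    have := pred_le_uval_sub hiu
    have := Finset.card_le_card hIL
    have := hIne'.card_pos
    omega

theorem scost_insert_of_star (hc : c ∉ L) (hL : ∀ x ∈ L, ∀ y ∈ L, ¬ G.Adj x y)
    (hcL : ∀ x ∈ L, G.Adj c x) :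
    scost G (insert c L) = L.card + 1 + uval L.card := by
  induction L using Finset.strongInduction with
  | H L ih =>
  have ih' : ∀ L' ⊂ L, scost G (insert c L') = L'.card + 1 + uval L'.card := fun L' hL' =>
    ih L' hL' (fun h => hc (hL'.1 h)) (fun x hx y hy => hL x (hL'.1 hx) y (hL'.1 hy))
      fun x hx => hcL x (hL'.1 hx)
  exact le_antisymm (scost_insert_le_of_indep hc hL fun L' hL' => (ih' L' hL').le)
    (le_scost_insert_of_adj hc hcL fun L' hL' => (ih' L' hL').ge)

end SlowColoring

/-- The sum-color cost of the star with `r` leaves is `r + 1 + u_r`. -/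
theorem stmt4 (r : ℕ) : scost (starGraph r) Finset.univ = r + 1 + uval r := by
  have hstar := scost_insert_of_star (G := starGraph r) (Finset.notMem_erase 0 Finset.univ)
    (by simp +contextual [starGraph]) (by simp [starGraph, eq_comm])
  rwa [Finset.insert_erase (Finset.mem_univ 0), Finset.card_erase_of_mem (Finset.mem_univ 0),
    Finset.card_univ, Fintype.card_fin, Nat.add_sub_cancel] at hstar
end

section
/- If G is a graph and (A, B) is a bipartition of V(G), then s̊(G[A]) + s̊(G[B]) ≤ s̊(G) ≤ s̊(G[A]) + s̊(G[B]) + |[A,B]|, where G[S] denotes the subgraph of G induced by S and [A,B] denotes the set of edges of G with one endpoint in A and one endpoint in B. -/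
variable {V : Type} [Fintype V] [DecidableEq V]

/-!
Lower bound: Lister plays an optimal strategy for `G[A]` inside `G`. Painter's responses then lie
in `A`, so after each round the game on `G` is again one on a disjoint union `G[A'] ∪ G[B]`, and
induction on `|A|` gives `s̊(G[A]) + s̊(G[B])`.

Upper bound: Painter responds to a marked set `M` with an optimal response `I_A` to `M ∩ A` in
`G[A]`, together with an optimal response in `G[B]` to the vertices of `M ∩ B` with no neighbour
in `I_A`. This is independent in `G`; each vertex of `M ∩ B` excluded this way costs one extra
point, paid for by an edge of `[A, B]` at a vertex of `I_A`, which disappears when `I_A` is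
coloured.
-/

namespace Finset

theorem card_eq_card_inter_add_card_inter {α : Type*} [DecidableEq α] {A B M : Finset α}
    (hAB : Disjoint A B) (hMAB : M ⊆ A ∪ B) : M.card = (M ∩ A).card + (M ∩ B).card := by
  rw [← card_union_of_disjoint (hAB.mono inter_subset_right inter_subset_right),
    ← inter_union_distrib_left, inter_eq_left.2 hMAB]

/-- `Finset.min` takes values in `WithTop`; `scost` reads it through `WithBot.unbotD`, which
typechecks because both are `Option`. -/
theorem unbotD_min_eq_min'_s6 {α : Type*} [LinearOrder α] (a : α) {T : Finset α}
    (hT : T.Nonempty) : WithBot.unbotD a T.min = T.min' hT := by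
  rw [← coe_min' hT]
  rfl

theorem image_attach_val {α β : Type*} [DecidableEq β] (s : Finset α) (f : α → β) :
    (s.attach.image fun x => f x.1) = s.image f := by
  classical
  conv_rhs => rw [← attach_image_val (s := s), image_image]
  rfl

end Finset

namespace SimpleGraph

open Finset

section

variable {α : Type*} [DecidableEq α] {G : SimpleGraph α}

theorem forall_not_adj_union {I J : Finset α} (hI : ∀ x ∈ I, ∀ y ∈ I, ¬ G.Adj x y)
    (hJ : ∀ x ∈ J, ∀ y ∈ J, ¬ G.Adj x y) (hIJ : ∀ a ∈ I, ∀ b ∈ J, ¬ G.Adj a b) :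
    ∀ x ∈ I ∪ J, ∀ y ∈ I ∪ J, ¬ G.Adj x y := by
  simp only [mem_union]
  rintro x (hx | hx) y (hy | hy) hxy
  exacts [hI x hx y hy hxy, hIJ x hx y hy hxy, hIJ y hy x hx hxy.symm, hJ x hx y hy hxy]

theorem card_add_card_interedges_sdiff_le [DecidableRel G.Adj] {A B I N : Finset α}
    (hIA : I ⊆ A) (hN : ∀ b ∈ N, b ∈ B ∧ ∃ a ∈ I, G.Adj a b) :
    N.card + (G.interedges (A \ I) B).card ≤ (G.interedges A B).card := by
  have hsplit : G.interedges A B = G.interedges I B ∪ G.interedges (A \ I) B := by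
    conv_lhs => rw [← union_sdiff_of_subset hIA]
    ext ⟨a, b⟩
    simp only [mem_union, mk_mem_interedges_iff]
    tauto
  have hNsub : N ⊆ (G.interedges I B).image Prod.snd := fun b hb => by
    obtain ⟨hbB, a, haI, hab⟩ := hN b hb
    exact mem_image.2 ⟨(a, b), (G.mk_mem_interedges_iff).2 ⟨haI, hbB, hab⟩, rfl⟩
  calc N.card + (G.interedges (A \ I) B).card
      ≤ (G.interedges I B).card + (G.interedges (A \ I) B).card := by
        gcongr
        exact (card_le_card hNsub).trans card_image_le
    _ = (G.interedges A B).card := by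
        rw [hsplit, card_union_of_disjoint (G.interedges_disjoint_left disjoint_sdiff _)]

end

variable (G : SimpleGraph V)

open Classical in
noncomputable def responses (M : Finset V) : Finset (Finset V) :=
  (M.powerset.erase ∅).filter fun I => ∀ x ∈ I, ∀ y ∈ I, ¬ G.Adj x y

variable {G}

theorem mem_responses {M I : Finset V} :
    I ∈ G.responses M ↔ I ⊆ M ∧ I.Nonempty ∧ ∀ x ∈ I, ∀ y ∈ I, ¬ G.Adj x y := by
  simp only [responses, mem_filter, mem_erase, ne_eq, mem_powerset, nonempty_iff_ne_empty]
  tauto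

theorem responses_nonempty {M : Finset V} (hM : M.Nonempty) : (G.responses M).Nonempty := by
  obtain ⟨x, hx⟩ := hM
  refine ⟨{x}, mem_responses.2 ⟨by simpa, singleton_nonempty x, ?_⟩⟩
  simp

variable (G) in
theorem scost_empty : scost G ∅ = 0 := by
  rw [scost, if_pos rfl]

theorem scost_eq_sup {S : Finset V} (hS : S.Nonempty) :
    scost G S = (S.powerset.erase ∅).sup fun M =>
      M.card + WithBot.unbotD 0 (((G.responses M).image fun I => scost G (S \ I)).min) := by
  rw [scost, if_neg hS.ne_empty]
  refine Eq.trans (sup_congr rfl fun M _ => ?_) (sup_attach _ _)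
  have := image_attach_val (G.responses M.1) (fun I => scost G (S \ I))
  unfold responses at this
  exact congrArg (fun T : Finset ℕ => M.1.card + WithBot.unbotD 0 T.min) this

theorem le_scost {S M : Finset V} (hMS : M ⊆ S) (hM : M.Nonempty) {m : ℕ}
    (h : ∀ I ∈ G.responses M, m ≤ scost G (S \ I)) : M.card + m ≤ scost G S := by
  have hT := (responses_nonempty (G := G) hM).image fun I => scost G (S \ I)
  rw [scost_eq_sup (hM.mono hMS)]
  refine le_trans ?_ (le_sup (f := fun M =>
    M.card + WithBot.unbotD 0 (((G.responses M).image fun I => scost G (S \ I)).min))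
    (mem_erase.2 ⟨hM.ne_empty, mem_powerset.2 hMS⟩))
  rw [unbotD_min_eq_min'_s6 0 hT]
  exact Nat.add_le_add_left (le_min' _ _ _ (by simpa using h)) _

theorem exists_mark {S : Finset V} (hS : S.Nonempty) :
    ∃ M ⊆ S, M.Nonempty ∧
      ∀ I ∈ G.responses M, scost G S ≤ M.card + scost G (S \ I) := by
  obtain ⟨M, hM, hmax⟩ :=
    exists_mem_eq_sup (S.powerset.erase ∅) ⟨S, by simpa using hS.ne_empty⟩ fun M =>
      M.card + WithBot.unbotD 0 (((G.responses M).image fun I => scost G (S \ I)).min)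
  obtain ⟨hM, hMS⟩ := mem_erase.1 hM
  have hMne := nonempty_iff_ne_empty.2 hM
  refine ⟨M, mem_powerset.1 hMS, hMne, fun I hI => ?_⟩
  rw [scost_eq_sup hS, hmax, unbotD_min_eq_min'_s6 0 ((responses_nonempty hMne).image _)]
  exact Nat.add_le_add_left (min'_le _ _ (mem_image_of_mem _ hI)) _

theorem exists_response {S M : Finset V} (hMS : M ⊆ S) :
    ∃ I ⊆ M, (M.Nonempty → I.Nonempty) ∧ (∀ x ∈ I, ∀ y ∈ I, ¬ G.Adj x y) ∧
      M.card + scost G (S \ I) ≤ scost G S := by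
  rcases M.eq_empty_or_nonempty with rfl | hM
  · exact ⟨∅, subset_rfl, by simp, by simp, by simp⟩
  obtain ⟨I, hI, hmin⟩ := mem_image.1
    (min'_mem _ ((responses_nonempty (G := G) hM).image fun I => scost G (S \ I)))
  obtain ⟨hIM, hIne, hIind⟩ := mem_responses.1 hI
  refine ⟨I, hIM, fun _ => hIne, hIind, le_scost hMS hM fun J hJ => ?_⟩
  exact hmin ▸ min'_le _ _ (mem_image_of_mem _ hJ)

theorem card_le_scost {S M : Finset V} (hMS : M ⊆ S) (hM : M.Nonempty) : M.card ≤ scost G S :=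
  le_scost hMS hM (m := 0) (fun _ _ => Nat.zero_le _)

variable (G) in
theorem scost_add_scost_le_scost_union {A B : Finset V} (hAB : Disjoint A B) :
    scost G A + scost G B ≤ scost G (A ∪ B) := by
  induction A using strongInduction with
  | _ A ih =>
  rcases A.eq_empty_or_nonempty with rfl | hA
  · simp [scost_empty]
  obtain ⟨M, hMA, hM, hmark⟩ := exists_mark (G := G) hA
  have hlower : M.card + (scost G A - M.card + scost G B) ≤ scost G (A ∪ B) := by
    refine le_scost (hMA.trans subset_union_left) hM fun I hI => ?_
    have hIA := (mem_responses.1 hI).1.trans hMA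
    have hsplit : (A ∪ B) \ I = (A \ I) ∪ B := by
      rw [union_sdiff_distrib, sdiff_eq_self_of_disjoint (hAB.symm.mono_right hIA)]
    have hrest := ih (A \ I) (sdiff_ssubset hIA (mem_responses.1 hI).2.1)
      (hAB.mono_left sdiff_subset)
    have := hmark I hI
    rw [hsplit]
    omega
  have := card_le_scost (G := G) hMA hM
  omega

section Interedges

variable [DecidableRel G.Adj]

theorem exists_response_union_le {A B M : Finset V} (hAB : Disjoint A B) (hMAB : M ⊆ A ∪ B)
    (hM : M.Nonempty) :
    ∃ I ∈ G.responses M, M.card + scost G (A \ I) + scost G (B \ I) +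
        (G.interedges (A \ I) (B \ I)).card ≤
      scost G A + scost G B + (G.interedges A B).card := by
  obtain ⟨IA, hIA, hIAne, hIAind, hIAval⟩ :=
    exists_response (G := G) (M := M ∩ A) (S := A) inter_subset_right
  set N := (M ∩ B).filter fun b => ∃ a ∈ IA, G.Adj a b with hN
  obtain ⟨IB, hIB, hIBne, hIBind, hIBval⟩ :=
    exists_response (G := G) (show (M ∩ B) \ N ⊆ B from
      sdiff_subset.trans inter_subset_right)
  have hIA_A : IA ⊆ A := hIA.trans inter_subset_right
  have hIB_B : IB ⊆ B := hIB.trans (sdiff_subset.trans inter_subset_right)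
  have hI : IA ∪ IB ∈ G.responses M := by
    refine mem_responses.2 ⟨union_subset (hIA.trans inter_subset_left)
      (hIB.trans (sdiff_subset.trans inter_subset_left)), ?_, ?_⟩
    · rcases (M ∩ A).eq_empty_or_nonempty with hMA | hMA
      · have hIA0 : IA = ∅ := subset_empty.1 (hMA ▸ hIA)
        obtain ⟨x, hx⟩ := hM
        have hxB : x ∈ B := (mem_union.1 (hMAB hx)).resolve_left fun hxA => by
          simpa [hMA] using mem_inter.2 ⟨hx, hxA⟩
        exact (hIBne ⟨x, by simp [hN, hIA0, hx, hxB]⟩).mono subset_union_right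
      · exact (hIAne hMA).mono subset_union_left
    · refine forall_not_adj_union hIAind hIBind fun a ha b hb hab => ?_
      exact (mem_sdiff.1 (hIB hb)).2
        (mem_filter.2 ⟨(mem_sdiff.1 (hIB hb)).1, a, ha, hab⟩)
  have hAI : A \ (IA ∪ IB) = A \ IA := by
    rw [sdiff_union_distrib, sdiff_eq_self_of_disjoint (hAB.mono_right hIB_B),
      inter_eq_left.2 sdiff_subset]
  have hBI : B \ (IA ∪ IB) = B \ IB := by
    rw [sdiff_union_distrib, sdiff_eq_self_of_disjoint (hAB.symm.mono_right hIA_A),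
      inter_eq_right.2 sdiff_subset]
  have hcard : M.card = (M ∩ A).card + ((M ∩ B) \ N).card + N.card := by
    rw [add_assoc, card_sdiff_add_card_eq_card (filter_subset _ _)]
    exact card_eq_card_inter_add_card_inter hAB hMAB
  have hcross := card_add_card_interedges_sdiff_le (G := G) (B := B) (N := N) hIA_A
    fun b hb => ⟨inter_subset_right (filter_subset _ _ hb), (mem_filter.1 hb).2⟩
  have hmono : (G.interedges (A \ IA) (B \ IB)).card ≤ (G.interedges (A \ IA) B).card :=
    card_le_card (G.interedges_mono subset_rfl sdiff_subset)
  refine ⟨IA ∪ IB, hI, ?_⟩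
  rw [hAI, hBI]
  omega

theorem scost_union_le {A B : Finset V} (hAB : Disjoint A B) :
    scost G (A ∪ B) ≤ scost G A + scost G B + (G.interedges A B).card := by
  induction hn : (A ∪ B).card using Nat.strong_induction_on generalizing A B with
  | _ n ih =>
  rcases (A ∪ B).eq_empty_or_nonempty with hS | hS
  · simp [hS, scost_empty]
  obtain ⟨M, hMS, hM, hmark⟩ := exists_mark (G := G) hS
  obtain ⟨I, hI, hval⟩ := exists_response_union_le (G := G) hAB hMS hM
  obtain ⟨hIM, hIne, -⟩ := mem_responses.1 hI
  have hlt : ((A \ I) ∪ (B \ I)).card < n := by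
    rw [← union_sdiff_distrib, ← hn]
    exact card_lt_card (sdiff_ssubset (hIM.trans hMS) hIne)
  have hrest := ih _ hlt (hAB.mono sdiff_subset sdiff_subset) rfl
  have := hmark I hI
  rw [union_sdiff_distrib] at this
  omega

end Interedges

end SimpleGraph

/-- If `(A, B)` is a bipartition of the vertex set of `G`, then
`s̊(G[A]) + s̊(G[B]) ≤ s̊(G) ≤ s̊(G[A]) + s̊(G[B]) + |[A,B]|`, where `[A,B]` is the
set of edges with one endpoint in `A` and one endpoint in `B`. -/
theorem stmt6 (G : SimpleGraph V) (A B : Finset V)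
    (hunion : A ∪ B = Finset.univ) (hdisj : Disjoint A B) :
    scost G A + scost G B ≤ scost G Finset.univ ∧
    scost G Finset.univ ≤
      scost G A + scost G B + {p : V × V | p.1 ∈ A ∧ p.2 ∈ B ∧ G.Adj p.1 p.2}.ncard := by
  classical
  have hcross : {p : V × V | p.1 ∈ A ∧ p.2 ∈ B ∧ G.Adj p.1 p.2}.ncard =
      (G.interedges A B).card := by
    rw [← Set.ncard_coe_finset]
    congr
    ext p
    simp [SimpleGraph.mem_interedges_iff]
  rw [← hunion, hcross]
  exact ⟨G.scost_add_scost_le_scost_union hdisj, G.scost_union_le hdisj⟩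
end

section
/- If G is a graph and (A, B) is a bipartition of V(G), then χ_ISC(G[A]) + χ_ISC(G[B]) ≤ χ_ISC(G) ≤ χ_ISC(G[A]) + χ_ISC(G[B]) + |[A,B]|, where G[S] denotes the subgraph of G induced by S and [A,B] denotes the set of edges of G with one endpoint in A and one endpoint in B. -/
variable {V : Type} [Fintype V] [DecidableEq V]

/-- The lists `L` admit a proper coloring of the subgraph of `G` induced by `S`,
with each vertex of `S` colored from its list. -/
def ColorableOn (G : SimpleGraph V) (S : Finset V) (L : V → Finset ℕ) : Prop :=
  ∃ φ : V → ℕ, (∀ v ∈ S, φ v ∈ L v) ∧ ∀ x ∈ S, ∀ y ∈ S, G.Adj x y → φ x ≠ φ y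

/-- In the interactive sum choice game on the subgraph of `G` induced by `S`, starting
from lists `L`, Requester can force the game to end within `n` further rounds: either the
current lists already admit a proper coloring, or Requester can request a new color at
some vertex `v ∈ S` so that, whatever color `c ∉ L v` Supplier adds to `L v`, Requester
can finish within `n - 1` further rounds. -/
def ReqWins (G : SimpleGraph V) (S : Finset V) : (V → Finset ℕ) → ℕ → Prop
  | L, 0 => ColorableOn G S L
  | L, n + 1 => ColorableOn G S L ∨
      ∃ v ∈ S, ∀ c ∉ L v, ReqWins G S (Function.update L v (insert c (L v))) n

/-- The interactive sum choice number of the subgraph of `G` induced by `S`: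
the optimal number of rounds of the interactive sum choice game, namely the least `n`
such that Requester can force the game, started from empty lists, to end within `n`
rounds. -/
noncomputable def isc (G : SimpleGraph V) (S : Finset V) : ℕ :=
  sInf {n | ReqWins G S (fun _ => ∅) n}

/-!
Lower bound: by induction on the length of Requester's winning strategy on `G`. A request at
`v ∈ A` leaves the lists on `B` untouched, so it only advances the game on `G[A]`; hence
Requester's strategy on `G` yields strategies on `G[A]` and `G[B]` of total length at most its own.

Upper bound: Requester first wins on `G[A]`, fixing a coloring `φ` of `A`, and then plays her
strategy for `G[B]` on the lists with the colors `φ(N(v) ∩ A)` removed. Supplier can answer with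
such a color only once per edge of `[A, B]`, so at most `|[A, B]|` rounds are lost.
-/

open Finset Function

section

omit [Fintype V]

variable {G : SimpleGraph V} {S T A B : Finset V} {L L' : V → Finset ℕ} {m n k : ℕ}

/-- The game of `ReqWins` with an arbitrary target `P`, so that strategies can be chained. -/
def Forces (S : Finset V) (P : (V → Finset ℕ) → Prop) : (V → Finset ℕ) → ℕ → Prop
  | L, 0 => P L
  | L, n + 1 => P L ∨ ∃ v ∈ S, ∀ c ∉ L v, Forces S P (update L v (insert c (L v))) n

theorem subset_update_insert (L : V → Finset ℕ) (v w : V) (c : ℕ) :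
    L w ⊆ update L v (insert c (L v)) w := by
  rcases eq_or_ne w v with rfl | hw
  · simp
  · rw [update_of_ne hw]

namespace Forces

variable {P Q : (V → Finset ℕ) → Prop}

theorem of_target (h : P L) : Forces S P L n := by
  cases n with
  | zero => exact h
  | succ n => exact Or.inl h

theorem succ (h : Forces S P L n) : Forces S P L (n + 1) := by
  induction n generalizing L with
  | zero => exact Or.inl h
  | succ n ih =>
    rcases h with h | ⟨v, hv, hmove⟩
    · exact Or.inl h
    · exact Or.inr ⟨v, hv, fun c hc => ih (hmove c hc)⟩

theorem mono (h : Forces S P L n) (hnm : n ≤ m) : Forces S P L m := by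
  induction m, hnm using Nat.le_induction with
  | base => exact h
  | succ m _ ih => exact ih.succ

theorem mono_set (h : Forces S P L n) (hST : S ⊆ T) : Forces T P L n := by
  induction n generalizing L with
  | zero => exact h
  | succ n ih =>
    rcases h with h | ⟨v, hv, hmove⟩
    · exact Or.inl h
    · exact Or.inr ⟨v, hST hv, fun c hc => ih (hmove c hc)⟩

theorem imp (h : Forces S P L n) (hPQ : ∀ L', (∀ v, L v ⊆ L' v) → P L' → Q L') :
    Forces S Q L n := by
  induction n generalizing L with
  | zero => exact hPQ L (fun _ => subset_rfl) h
  | succ n ih =>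
    rcases h with h | ⟨v, hv, hmove⟩
    · exact Or.inl (hPQ L (fun _ => subset_rfl) h)
    · refine Or.inr ⟨v, hv, fun c hc => ih (hmove c hc) fun L' hL' => hPQ L' fun w => ?_⟩
      exact (subset_update_insert L v w c).trans (hL' w)

theorem seq (h : Forces S P L n) (hPQ : ∀ L', P L' → Forces S Q L' m) :
    Forces S Q L (n + m) := by
  induction n generalizing L with
  | zero => simpa using hPQ L h
  | succ n ih =>
    rcases h with h | ⟨v, hv, hmove⟩
    · exact (hPQ L h).mono (by omega)
    · rw [Nat.add_right_comm]
      exact Or.inr ⟨v, hv, fun c hc => ih (hmove c hc)⟩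

end Forces

theorem reqWins_iff_forces : ReqWins G S L n ↔ Forces S (ColorableOn G S) L n := by
  induction n generalizing L with
  | zero => rfl
  | succ n ih => exact or_congr Iff.rfl (exists_congr fun v => and_congr_right fun _ =>
      forall₂_congr fun c _ => ih)

theorem ReqWins.mono (h : ReqWins G S L n) (hnm : n ≤ m) : ReqWins G S L m :=
  reqWins_iff_forces.mpr ((reqWins_iff_forces.mp h).mono hnm)

omit [DecidableEq V] in
theorem ColorableOn.mono_list (h : ColorableOn G S L) (hL : ∀ v ∈ S, L v ⊆ L' v) :
    ColorableOn G S L' :=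
  let ⟨φ, hφL, hφ⟩ := h
  ⟨φ, fun v hv => hL v hv (hφL v hv), hφ⟩

omit [DecidableEq V] in
theorem ColorableOn.restrict (h : ColorableOn G S L) (hTS : T ⊆ S) : ColorableOn G T L :=
  let ⟨φ, hφL, hφ⟩ := h
  ⟨φ, fun v hv => hφL v (hTS hv), fun x hx y hy => hφ x (hTS hx) y (hTS hy)⟩

theorem ReqWins.mono_list (h : ReqWins G S L n) (hL : ∀ v ∈ S, L v ⊆ L' v) :
    ReqWins G S L' n := by
  induction n generalizing L L' with
  | zero => exact ColorableOn.mono_list h hL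
  | succ n ih =>
    rcases h with h | ⟨v, hv, hmove⟩
    · exact Or.inl (h.mono_list hL)
    · refine Or.inr ⟨v, hv, fun c hc => ih (hmove c fun hcL => hc (hL v hv hcL)) fun w hw => ?_⟩
      rcases eq_or_ne w v with rfl | hwv
      · simpa using insert_subset_insert c (hL w hw)
      · simpa [hwv] using hL w hw

/-- A request outside `T` can be ignored when playing on `G[T]`, at the cost of one round. -/
theorem ReqWins.restrict (h : ReqWins G S L n) (hTS : T ⊆ S) : ReqWins G T L n := by
  induction n generalizing L with
  | zero => exact ColorableOn.restrict h hTS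
  | succ n ih =>
    rcases h with h | ⟨v, hv, hmove⟩
    · exact Or.inl (h.restrict hTS)
    · by_cases hvT : v ∈ T
      · exact Or.inr ⟨v, hvT, fun c hc => ih (hmove c hc)⟩
      · obtain ⟨c, hc⟩ := Infinite.exists_notMem_finset (L v)
        refine ReqWins.mono (ih (hmove c hc) |>.mono_list fun w hw => ?_) n.le_succ
        rw [update_of_ne (ne_of_mem_of_not_mem hw hvT)]

theorem update_insert_sdiff_of_mem {F : V → Finset ℕ} {v : V} {c : ℕ} (hc : c ∈ F v) :
    (fun w => update L v (insert c (L v)) w \ F w) = fun w => L w \ F w := by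
  funext w
  rw [apply_update (fun w s => s \ F w), insert_sdiff_of_mem _ hc, update_eq_self]

theorem update_insert_sdiff_of_notMem {F : V → Finset ℕ} {v : V} {c : ℕ} (hc : c ∉ F v) :
    (fun w => update L v (insert c (L v)) w \ F w) =
      update (fun w => L w \ F w) v (insert c (L v \ F v)) := by
  funext w
  rw [apply_update (fun w s => s \ F w), insert_sdiff_of_notMem _ hc]

theorem sum_card_sdiff_update_insert_le (F L : V → Finset ℕ) (v : V) (c : ℕ) :
    ∑ w ∈ S, #(F w \ update L v (insert c (L v)) w) ≤ ∑ w ∈ S, #(F w \ L w) :=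
  sum_le_sum fun w _ => card_le_card (sdiff_subset_sdiff subset_rfl (subset_update_insert L v w c))

theorem sum_card_sdiff_update_insert_lt {F : V → Finset ℕ} {v : V} {c : ℕ} (hv : v ∈ S)
    (hcF : c ∈ F v) (hcL : c ∉ L v) :
    ∑ w ∈ S, #(F w \ update L v (insert c (L v)) w) < ∑ w ∈ S, #(F w \ L w) := by
  refine sum_lt_sum (fun w _ => ?_) ⟨v, hv, ?_⟩
  · exact card_le_card (sdiff_subset_sdiff subset_rfl (subset_update_insert L v w c))
  · rw [update_self, sdiff_insert]
    exact card_erase_lt_of_mem (mem_sdiff.mpr ⟨hcF, hcL⟩)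

/-- Requester plays a winning strategy for the lists with the forbidden colors `F` removed; each
answer from `F v \ L v` wastes a round but does not change those lists. -/
theorem forces_of_reqWins_sdiff {F : V → Finset ℕ} (h : ReqWins G S (fun v => L v \ F v) n) :
    Forces S (fun L' => ColorableOn G S fun v => L' v \ F v) L (n + ∑ v ∈ S, #(F v \ L v)) := by
  suffices ∀ N n L, n + ∑ v ∈ S, #(F v \ L v) ≤ N → ReqWins G S (fun v => L v \ F v) n →
      Forces S (fun L' => ColorableOn G S fun v => L' v \ F v) L N from this _ n L le_rfl h
  intro N
  induction N with
  | zero =>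
    intro n L hN h
    obtain rfl : n = 0 := by omega
    exact h
  | succ N ih =>
    intro n L hN h
    cases n with
    | zero => exact Forces.of_target h
    | succ n =>
      rcases h with h | ⟨v, hv, hmove⟩
      · exact Forces.of_target h
      refine Or.inr ⟨v, hv, fun c hc => ?_⟩
      by_cases hcF : c ∈ F v
      · have hlt := sum_card_sdiff_update_insert_lt hv hcF hc
        refine ih (n + 1) _ (by omega) ?_
        rw [update_insert_sdiff_of_mem hcF]
        exact Or.inr ⟨v, hv, hmove⟩
      · have hle := sum_card_sdiff_update_insert_le (S := S) F L v c
        refine ih n _ (by omega) ?_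
        rw [update_insert_sdiff_of_notMem hcF]
        exact hmove c fun hc' => hc (mem_sdiff.mp hc').1

theorem colorableOn_union [DecidableRel G.Adj] {φ : V → ℕ} (hφL : ∀ v ∈ A, φ v ∈ L v)
    (hφ : ∀ x ∈ A, ∀ y ∈ A, G.Adj x y → φ x ≠ φ y)
    (hB : ColorableOn G B fun y => L y \ {x ∈ A | G.Adj x y}.image φ) :
    ColorableOn G (A ∪ B) L := by
  obtain ⟨ψ, hψL, hψ⟩ := hB
  have hψA : ∀ x ∈ A, ∀ y ∈ B, G.Adj x y → φ x ≠ ψ y := fun x hx y hy hxy he =>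
    (mem_sdiff.mp (hψL y hy)).2 (he ▸ mem_image_of_mem φ (mem_filter.mpr ⟨hx, hxy⟩))
  refine ⟨fun x => if x ∈ A then φ x else ψ x, fun v hv => ?_, fun x hx y hy hxy => ?_⟩
  · by_cases hvA : v ∈ A
    · simpa [hvA] using hφL v hvA
    · simpa [hvA] using (mem_sdiff.mp (hψL v ((mem_union.mp hv).resolve_left hvA))).1
  · have hxB := (mem_union.mp hx).resolve_left
    have hyB := (mem_union.mp hy).resolve_left
    by_cases hxA : x ∈ A <;> by_cases hyA : y ∈ A <;> simp only [hxA, hyA, if_true, if_false]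
    · exact hφ x hxA y hyA hxy
    · exact hψA x hxA y (hyB hyA) hxy
    · exact (hψA y hyA x (hxB hxA) hxy.symm).symm
    · exact hψ x (hxB hxA) y (hyB hyA) hxy

omit [DecidableEq V] in
theorem sum_card_filter_adj_eq_ncard [DecidableRel G.Adj] :
    ∑ y ∈ B, #{x ∈ A | G.Adj x y} = {p : V × V | p.1 ∈ A ∧ p.2 ∈ B ∧ G.Adj p.1 p.2}.ncard := by
  have hset : {p : V × V | p.1 ∈ A ∧ p.2 ∈ B ∧ G.Adj p.1 p.2} = ↑{p ∈ A ×ˢ B | G.Adj p.1 p.2} := by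
    ext p
    simp [and_assoc]
  rw [hset, Set.ncard_coe_finset, card_filter, sum_product, sum_comm]
  simp only [card_filter]

theorem reqWins_union (hA : ReqWins G A (fun _ => ∅) m) (hB : ReqWins G B (fun _ => ∅) k) :
    ReqWins G (A ∪ B) (fun _ => ∅)
      (m + k + {p : V × V | p.1 ∈ A ∧ p.2 ∈ B ∧ G.Adj p.1 p.2}.ncard) := by
  classical
  rw [reqWins_iff_forces, add_assoc]
  refine ((reqWins_iff_forces.mp hA).mono_set subset_union_left).seq fun L hL => ?_
  obtain ⟨φ, hφL, hφ⟩ := hL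
  set F : V → Finset ℕ := fun y => {x ∈ A | G.Adj x y}.image φ
  have hwasted : ∑ y ∈ B, #(F y \ L y) ≤ {p : V × V | p.1 ∈ A ∧ p.2 ∈ B ∧ G.Adj p.1 p.2}.ncard :=
    sum_card_filter_adj_eq_ncard (G := G) ▸
      sum_le_sum fun y _ => (card_le_card sdiff_subset).trans card_image_le
  have hsim := forces_of_reqWins_sdiff (F := F) (L := L) (hB.mono_list fun v _ => empty_subset _)
  exact ((hsim.mono (by omega)).mono_set subset_union_right).imp fun L' hLL' hB' =>
    colorableOn_union (fun v hv => hLL' v (hφL v hv)) hφ hB'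

theorem reqWins_singleton (v : V) : ReqWins G {v} (fun _ => ∅) 1 :=
  Or.inr ⟨v, mem_singleton_self v, fun c _ => ⟨fun _ => c, by simp, by simp⟩⟩

theorem exists_reqWins (S : Finset V) : ∃ n, ReqWins G S (fun _ => ∅) n := by
  induction S using Finset.induction_on with
  | empty => exact ⟨0, ⟨fun _ => 0, by simp, by simp⟩⟩
  | insert v S _ ih =>
    obtain ⟨n, hn⟩ := ih
    exact ⟨_, insert_eq v S ▸ reqWins_union (reqWins_singleton v) hn⟩

noncomputable def iscFrom (G : SimpleGraph V) (S : Finset V) (L : V → Finset ℕ) : ℕ :=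
  sInf {n | ReqWins G S L n}

theorem iscFrom_le (h : ReqWins G S L n) : iscFrom G S L ≤ n :=
  Nat.sInf_le h

theorem iscFrom_eq_zero (h : ColorableOn G S L) : iscFrom G S L = 0 :=
  Nat.le_zero.mp (iscFrom_le (n := 0) h)

theorem reqWins_iscFrom (h : ReqWins G S L n) : ReqWins G S L (iscFrom G S L) :=
  Nat.sInf_mem ⟨n, h⟩

theorem reqWins_isc (G : SimpleGraph V) (S : Finset V) : ReqWins G S (fun _ => ∅) (isc G S) :=
  let ⟨_, h⟩ := exists_reqWins S
  reqWins_iscFrom h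

theorem iscFrom_congr (hL : ∀ v ∈ S, L v = L' v) : iscFrom G S L = iscFrom G S L' :=
  congrArg sInf <| Set.ext fun _ =>
    ⟨fun h => h.mono_list fun v hv => (hL v hv).subset,
      fun h => h.mono_list fun v hv => (hL v hv).symm.subset⟩

theorem iscFrom_add_iscFrom_le_succ {v : V} (hdisj : Disjoint A B) (hAS : A ⊆ S) (hv : v ∈ A)
    (hmove : ∀ c ∉ L v, ReqWins G S (update L v (insert c (L v))) n)
    (ih : ∀ c ∉ L v, iscFrom G A (update L v (insert c (L v))) +
      iscFrom G B (update L v (insert c (L v))) ≤ n) :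
    iscFrom G A L + iscFrom G B L ≤ n + 1 := by
  have hB (c : ℕ) : iscFrom G B (update L v (insert c (L v))) = iscFrom G B L :=
    iscFrom_congr fun w hw => update_of_ne (ne_of_mem_of_not_mem hw (disjoint_left.mp hdisj hv)) _ _
  simp only [hB] at ih
  obtain ⟨c₀, hc₀⟩ := Infinite.exists_notMem_finset (L v)
  have hA : ReqWins G A L (n - iscFrom G B L + 1) := Or.inr ⟨v, hv, fun c hc =>
    (reqWins_iscFrom ((hmove c hc).restrict hAS)).mono (by have := ih c hc; omega)⟩
  have := ih c₀ hc₀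
  have := iscFrom_le hA
  omega

theorem iscFrom_add_iscFrom_le (hAB : A ∪ B = S) (hdisj : Disjoint A B)
    (h : ReqWins G S L n) : iscFrom G A L + iscFrom G B L ≤ n := by
  have hAS : A ⊆ S := hAB ▸ subset_union_left
  have hBS : B ⊆ S := hAB ▸ subset_union_right
  induction n generalizing L with
  | zero => simp [iscFrom_eq_zero (h.restrict hAS), iscFrom_eq_zero (h.restrict hBS)]
  | succ n ih =>
    rcases h with h | ⟨v, hv, hmove⟩
    · simp [iscFrom_eq_zero (h.restrict hAS), iscFrom_eq_zero (h.restrict hBS)]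
    rcases mem_union.mp (hAB ▸ hv) with hvA | hvB
    · exact iscFrom_add_iscFrom_le_succ hdisj hAS hvA hmove fun c hc => ih (hmove c hc)
    · rw [add_comm]
      exact iscFrom_add_iscFrom_le_succ hdisj.symm hBS hvB hmove fun c hc =>
        (add_comm _ _).trans_le (ih (hmove c hc))

end

/-- If `(A, B)` is a bipartition of the vertex set of `G`, then
`χ_ISC(G[A]) + χ_ISC(G[B]) ≤ χ_ISC(G) ≤ χ_ISC(G[A]) + χ_ISC(G[B]) + |[A,B]|`. -/
theorem stmt15 (G : SimpleGraph V) (A B : Finset V)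
    (hunion : A ∪ B = Finset.univ) (hdisj : Disjoint A B) :
    isc G A + isc G B ≤ isc G Finset.univ ∧
    isc G Finset.univ ≤
      isc G A + isc G B + {p : V × V | p.1 ∈ A ∧ p.2 ∈ B ∧ G.Adj p.1 p.2}.ncard :=
  ⟨iscFrom_add_iscFrom_le hunion hdisj (reqWins_isc G _),
    iscFrom_le (hunion ▸ reqWins_union (reqWins_isc G A) (reqWins_isc G B))⟩
end

section
/- If G is a graph with n vertices whose chromatic number is at most k, then s̊(G) ≤ k·n. -/
/-! Painter fixes a proper colouring with `k` colours and, whenever Lister marks `M`, colours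
the largest colour class `I` of `M`. Then `|M| ≤ k·|I|`: the score of each round is at most `k`
per vertex coloured in it, and induction on the set of uncoloured vertices gives `k·n`. -/

variable {V : Type} [Fintype V] [DecidableEq V]

open Finset

theorem Finset.unbotD_min_le {α : Type*} [LinearOrder α] {s : Finset α} {a : α} (d : α)
    (ha : a ∈ s) : WithBot.unbotD d s.min ≤ a := by
  rw [← coe_min' ⟨a, ha⟩]
  exact min'_le s a ha

theorem scost_le_of_forall_exists_isIndepSet {G : SimpleGraph V} {S : Finset V} {b : ℕ}
    (h : ∀ M ⊆ S, M.Nonempty →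
      ∃ I ⊆ M, I.Nonempty ∧ G.IsIndepSet ↑I ∧ #M + scost G (S \ I) ≤ b) :
    scost G S ≤ b := by
  rw [scost]
  split_ifs
  · exact Nat.zero_le b
  refine Finset.sup_le fun ⟨M, hM⟩ _ => ?_
  obtain ⟨hM, hMS⟩ : M ≠ ∅ ∧ M ⊆ S := by simpa only [mem_erase, mem_powerset] using hM
  obtain ⟨I, hIM, hI, hIndep, hb⟩ := h M hMS (nonempty_iff_ne_empty.2 hM)
  refine le_trans (Nat.add_le_add_left ?_ _) hb
  refine unbotD_min_le 0 (mem_image.2 ⟨⟨I, ?_⟩, mem_attach _ _, rfl⟩)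
  simp only [mem_filter, mem_erase, mem_powerset]
  exact ⟨⟨hI.ne_empty, hIM⟩, fun x hx y hy hxy => hIndep hx hy hxy.ne hxy⟩

theorem exists_card_le_mul_card_fiber {ι α : Type*} [Fintype α] [DecidableEq α]
    (f : ι → α) {s : Finset ι} (hs : s.Nonempty) :
    ∃ c, #s ≤ Fintype.card α * #{x ∈ s | f x = c} := by
  obtain ⟨x, -⟩ := hs
  obtain ⟨c, -, hc⟩ :=
    exists_max_image univ (fun c => #{x ∈ s | f x = c}) ⟨f x, mem_univ _⟩
  refine ⟨c, ?_⟩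
  calc #s = ∑ d, #{x ∈ s | f x = d} :=
        card_eq_sum_card_fiberwise fun x _ => mem_coe.2 (mem_univ (f x))
    _ ≤ Fintype.card α * #{x ∈ s | f x = c} := by
        simpa using sum_le_card_nsmul univ _ _ fun d _ => hc d (mem_univ d)

theorem scost_le_card_mul_card {α : Type*} [Fintype α] [DecidableEq α] {G : SimpleGraph V}
    (C : G.Coloring α) (S : Finset V) : scost G S ≤ Fintype.card α * #S := by
  induction S using Finset.strongInduction with
  | H S ih =>
  refine scost_le_of_forall_exists_isIndepSet fun M hMS hM => ?_
  obtain ⟨c, hc⟩ := exists_card_le_mul_card_fiber C hM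
  set I := {x ∈ M | C x = c}
  have hIM : I ⊆ M := filter_subset _ _
  have hI : I.Nonempty := by
    rw [← card_pos]
    exact Nat.pos_of_mul_pos_left (hM.card_pos.trans_le hc)
  have hIndep : G.IsIndepSet ↑I :=
    (C.isIndepSet_colorClass c).mono fun x hx => (mem_filter.1 hx).2
  have hIS : I ⊆ S := hIM.trans hMS
  refine ⟨I, hIM, hI, hIndep, ?_⟩
  calc #M + scost G (S \ I) ≤ Fintype.card α * #I + Fintype.card α * #(S \ I) :=
        Nat.add_le_add hc (ih _ (sdiff_ssubset hIS hI))
    _ = Fintype.card α * #S := by rw [← mul_add, add_comm, card_sdiff_add_card_eq_card hIS]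

/-- If `G` is a graph with `n` vertices whose chromatic number is at most `k`, then
`s̊(G) ≤ k · n`. -/
theorem stmt19 (G : SimpleGraph V) (k : ℕ)
    (hk : G.chromaticNumber ≤ (k : ℕ∞)) :
    scost G Finset.univ ≤ k * Fintype.card V := by
  obtain ⟨C⟩ := SimpleGraph.chromaticNumber_le_iff_colorable.mp hk
  simpa using scost_le_card_mul_card C univ
end
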